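/- arXiv:math/9809167 — 3 statements merged into one kernel-verified Lean document; each statement's English description precedes it below -/
import Mathlib

section
/- Let V be a finite-dimensional real inner product space with inner product g₀, ω a nondegenerate alternating bilinear form, A the endomorphism with g₀(A x, y) = ω(x, y), B the unique positive-definite self-adjoint square root of -A², and J = B⁻¹ ∘ A. Then J² = -Id. -/
/-!
Since `B² = -A²` commutes with `A`, the commutator `C = AB - BA` anticommutes with `B`.
An operator anticommuting with a positive definite `B` sends each eigenvector of `B` (eigenvalue
`λ > 0`) to an eigenvector of eigenvalue `-λ < 0`, hence to `0`; so `A` and `B` commute. Then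
`B² J² = B A J = A B J = A² = -B²`, and `B` is injective.
-/

section

open RealInnerProductSpace

variable {V : Type*} [NormedAddCommGroup V] [InnerProductSpace ℝ V]

theorem injective_of_inner_self_pos {B : V →ₗ[ℝ] V} (hpos : ∀ x, x ≠ 0 → 0 < ⟪B x, x⟫) :
    Function.Injective B := by
  refine (injective_iff_map_eq_zero B).2 fun x hx => ?_
  by_contra hne
  simpa [hx] using hpos x hne

theorem eq_zero_of_mul_eq_neg_mul [FiniteDimensional ℝ V] {B C : Module.End ℝ V}
    (hB : B.IsSymmetric) (hpos : ∀ x, x ≠ 0 → 0 < ⟪B x, x⟫) (hBC : B * C = -(C * B)) :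
    C = 0 := by
  set v := hB.eigenvectorBasis rfl
  set μ := hB.eigenvalues rfl
  refine v.toBasis.ext fun i => ?_
  rw [OrthonormalBasis.coe_toBasis, LinearMap.zero_apply]
  by_contra hne
  have hμ : 0 < μ i := by
    simpa [v, μ, inner_smul_left, v.orthonormal.1 i] using hpos (v i) (v.orthonormal.ne_zero i)
  have hBCv : B (C (v i)) = -μ i • C (v i) := by
    simpa [v, μ, neg_smul] using congr($hBC (v i))
  have hpos_Cv := hpos _ hne
  rw [hBCv, real_inner_smul_left, real_inner_self_eq_norm_sq] at hpos_Cv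
  nlinarith [sq_nonneg ‖C (v i)‖]

theorem commute_of_commute_mul_self [FiniteDimensional ℝ V] {A B : Module.End ℝ V}
    (hB : B.IsSymmetric) (hpos : ∀ x, x ≠ 0 → 0 < ⟪B x, x⟫) (h : Commute (B * B) A) :
    Commute B A := by
  have hanti : B * (B * A - A * B) = -((B * A - A * B) * B) := by
    simp only [mul_sub, sub_mul, ← mul_assoc, h.eq]
    noncomm_ring
  exact sub_eq_zero.1 (eq_zero_of_mul_eq_neg_mul hB hpos hanti)

end

theorem gromov_J_squared_eq_neg_id_general
    (V : Type*) [NormedAddCommGroup V] [InnerProductSpace ℝ V] [FiniteDimensional ℝ V]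
    (A B J : V →ₗ[ℝ] V)
    (hBsa : ∀ x y, (inner ℝ (B x) y : ℝ) = (inner ℝ x (B y) : ℝ))
    (hBpos : ∀ x : V, x ≠ 0 → 0 < (inner ℝ (B x) x : ℝ))
    (hB2 : B ∘ₗ B = -(A ∘ₗ A))
    (hJ : B ∘ₗ J = A) :
    J ∘ₗ J = -LinearMap.id := by
  have hB2 : B * B = -(A * A) := hB2
  have hJ : B * J = A := hJ
  have hBA : Commute B A := commute_of_commute_mul_self hBsa hBpos <| by
    rw [hB2]
    exact ((Commute.refl A).mul_left (Commute.refl A)).neg_left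
  have hinj := injective_of_inner_self_pos hBpos
  refine (LinearMap.cancel_left hinj).1 <| (LinearMap.cancel_left hinj).1 ?_
  calc B * (B * (J * J)) = B * A * J := by rw [← hJ]; noncomm_ring
    _ = A * A := by rw [hBA.eq, mul_assoc, hJ]
    _ = B * (B * -1) := by rw [mul_neg_one, mul_neg, hB2, neg_neg]

theorem gromov_J_squared_eq_neg_id
    (V : Type*) [NormedAddCommGroup V] [InnerProductSpace ℝ V] [FiniteDimensional ℝ V]
    (ω : V →ₗ[ℝ] V →ₗ[ℝ] ℝ)
    (hskew : ∀ x y, ω x y = - ω y x)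
    (hnd : ∀ x, (∀ y, ω x y = 0) → x = 0)
    (A B J : V →ₗ[ℝ] V)
    (hA : ∀ x y, (inner ℝ (A x) y : ℝ) = ω x y)
    (hBsa : ∀ x y, (inner ℝ (B x) y : ℝ) = (inner ℝ x (B y) : ℝ))
    (hBpos : ∀ x : V, x ≠ 0 → 0 < (inner ℝ (B x) x : ℝ))
    (hB2 : B ∘ₗ B = -(A ∘ₗ A))
    (hJ : B ∘ₗ J = A) :
    J ∘ₗ J = -LinearMap.id :=
  gromov_J_squared_eq_neg_id_general V A B J hBsa hBpos hB2 hJ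
end

section
/- With V, g₀, ω, A, B, J as in the Gromov construction, the bilinear form g defined by g(x, y) = ω(x, J y) is symmetric and positive definite, and J is an isometry for g: g(J x, J y) = g(x, y) for all x, y ∈ V. -/
/-!
Since `B² = -A²` commutes with `A`, so does its positive square root `B`: the commutator
`M = AB - BA` anticommutes with `B`, so it maps each eigenvector of `B` (eigenvalue `λ > 0`) to an
eigenvector for `-λ` or to `0`, and positivity of `B` leaves only `0`. Then `B²J² = A² = -B²`
gives `J² = -1`, and `g(x, y) = ⟪A x, J y⟫ = ⟪B J x, J y⟫` is symmetric and positive definite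
because `B` is; `J`-invariance of `g` follows from `J² = -1` and the skew-symmetry of `ω`.
-/

open scoped InnerProductSpace

namespace LinearMap

variable {E : Type*} [NormedAddCommGroup E] [InnerProductSpace ℝ E] {B : Module.End ℝ E}

theorem pos_of_apply_eq_smul_of_inner_pos (hpos : ∀ x, x ≠ 0 → 0 < ⟪B x, x⟫_ℝ) {v : E} {μ : ℝ}
    (hv : v ≠ 0) (h : B v = μ • v) : 0 < μ := by
  have hinner : 0 < μ * ⟪v, v⟫_ℝ := by simpa [h, real_inner_smul_left] using hpos v hv
  exact pos_of_mul_pos_left hinner (real_inner_self_pos.mpr hv).le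

theorem injective_of_inner_pos (hpos : ∀ x, x ≠ 0 → 0 < ⟪B x, x⟫_ℝ) : Function.Injective B := by
  refine (injective_iff_map_eq_zero B).mpr fun x hx => ?_
  by_contra hx0
  simpa [hx] using hpos x hx0

theorem eq_zero_of_mul_eq_neg_mul [FiniteDimensional ℝ E] (hB : B.IsSymmetric)
    (hpos : ∀ x, x ≠ 0 → 0 < ⟪B x, x⟫_ℝ) {M : Module.End ℝ E} (h : B * M = -(M * B)) : M = 0 := by
  let b := hB.eigenvectorBasis rfl
  refine b.toBasis.ext fun i => ?_
  set v := b i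
  set μ : ℝ := hB.eigenvalues rfl i
  have hv : B v = μ • v := hB.apply_eigenvectorBasis rfl i
  have hμ : 0 < μ := pos_of_apply_eq_smul_of_inner_pos hpos (b.toBasis.ne_zero i) hv
  have hMv : B (M v) = (-μ) • M v := by
    rw [← Module.End.mul_apply, h, neg_apply, Module.End.mul_apply, hv, map_smul, neg_smul]
  by_contra hne
  linarith [pos_of_apply_eq_smul_of_inner_pos hpos hne hMv]

theorem commute_of_commute_mul_self [FiniteDimensional ℝ E] (hB : B.IsSymmetric)
    (hpos : ∀ x, x ≠ 0 → 0 < ⟪B x, x⟫_ℝ) {A : Module.End ℝ E} (h : Commute A (B * B)) :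
    Commute A B := by
  refine sub_eq_zero.mp (eq_zero_of_mul_eq_neg_mul hB hpos ?_)
  have h' : B * B * A = A * B * B := by rw [h.eq.symm, mul_assoc]
  calc B * (A * B - B * A) = B * A * B - B * B * A := by noncomm_ring
    _ = -((A * B - B * A) * B) := by rw [h']; noncomm_ring

end LinearMap

theorem gromov_metric_hermitian_general
    (V : Type*) [NormedAddCommGroup V] [InnerProductSpace ℝ V] [FiniteDimensional ℝ V]
    (ω : V →ₗ[ℝ] V →ₗ[ℝ] ℝ)
    (hskew : ∀ x y, ω x y = - ω y x)
    (A B J : V →ₗ[ℝ] V)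
    (hA : ∀ x y, (inner ℝ (A x) y : ℝ) = ω x y)
    (hBsa : ∀ x y, (inner ℝ (B x) y : ℝ) = (inner ℝ x (B y) : ℝ))
    (hBpos : ∀ x : V, x ≠ 0 → 0 < (inner ℝ (B x) x : ℝ))
    (hB2 : B ∘ₗ B = -(A ∘ₗ A))
    (hJ : B ∘ₗ J = A)
    (g : V → V → ℝ)
    (hg : ∀ x y, g x y = ω x (J y)) :
    (∀ x y, g x y = g y x) ∧
      (∀ x : V, x ≠ 0 → 0 < g x x) ∧
      (∀ x y, g (J x) (J y) = g x y) := by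
  have hBJ (x : V) : B (J x) = A x := LinearMap.congr_fun hJ x
  have hB2' : B * B = -(A * A) := hB2
  have hAB : Commute A B := LinearMap.commute_of_commute_mul_self hBsa hBpos
    (hB2' ▸ ((Commute.refl A).mul_right (Commute.refl A)).neg_right)
  have hJJ (x : V) : J (J x) = -x := by
    refine LinearMap.injective_of_inner_pos hBpos (LinearMap.injective_of_inner_pos hBpos ?_)
    calc B (B (J (J x))) = B (A (J x)) := by rw [hBJ]
      _ = A (A x) := by rw [← Module.End.mul_apply, ← hAB.eq, Module.End.mul_apply, hBJ]
      _ = B (B (-x)) := by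
          rw [map_neg, map_neg, ← Module.End.mul_apply B, hB2', LinearMap.neg_apply, neg_neg]; rfl
  have hg_inner (x y : V) : g x y = ⟪B (J x), J y⟫_ℝ := by rw [hg, ← hA, hBJ]
  have hsymm (x y : V) : g x y = g y x := by rw [hg_inner, hg_inner, hBsa, real_inner_comm]
  refine ⟨hsymm, fun x hx => ?_, fun x y => ?_⟩
  · rw [hg_inner]
    refine hBpos _ fun hJx => hx ?_
    simpa [hJx] using (hJJ x).symm
  · rw [hg, hJJ, map_neg, hskew, neg_neg, ← hg, hsymm]

theorem gromov_metric_hermitian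
    (V : Type*) [NormedAddCommGroup V] [InnerProductSpace ℝ V] [FiniteDimensional ℝ V]
    (ω : V →ₗ[ℝ] V →ₗ[ℝ] ℝ)
    (hskew : ∀ x y, ω x y = - ω y x)
    (hnd : ∀ x, (∀ y, ω x y = 0) → x = 0)
    (A B J : V →ₗ[ℝ] V)
    (hA : ∀ x y, (inner ℝ (A x) y : ℝ) = ω x y)
    (hBsa : ∀ x y, (inner ℝ (B x) y : ℝ) = (inner ℝ x (B y) : ℝ))
    (hBpos : ∀ x : V, x ≠ 0 → 0 < (inner ℝ (B x) x : ℝ))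
    (hB2 : B ∘ₗ B = -(A ∘ₗ A))
    (hJ : B ∘ₗ J = A)
    (g : V → V → ℝ)
    (hg : ∀ x y, g x y = ω x (J y)) :
    (∀ x y, g x y = g y x) ∧
      (∀ x : V, x ≠ 0 → 0 < g x x) ∧
      (∀ x y, g (J x) (J y) = g x y) :=
  gromov_metric_hermitian_general V ω hskew A B J hA hBsa hBpos hB2 hJ g hg
end

section
/- Let V be a finite-dimensional real inner product space with inner product g₀ and let ω be a nondegenerate alternating bilinear form. Suppose φ : V → V is a linear isometry of g₀ that also preserves ω (ω(φx, φy) = ω(x, y)). Then φ commutes with the Gromov almost complex structure J = B⁻¹A (where g₀(Ax,y) = ω(x,y), B = √(-A²)), and φ is an isometry of the associated metric g(x,y) = ω(x, Jy). -/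
/-!
Since `φ` is orthogonal and preserves `ω`, it commutes with `A`, hence with `B² = -A²`. Then
`φ B φ⁻¹` is another positive-definite symmetric square root of `B²`, so by uniqueness of such
square roots `φ` commutes with `B`, and therefore with `J = B⁻¹ A`. Finally
`g (φ x) (φ y) = ω (φ x) (φ (J y)) = ω x (J y)`.
-/

open Module.End

open scoped InnerProductSpace

theorem Commute.of_isLeftRegular {M : Type*} [Monoid M] {u b j : M} (hb : IsLeftRegular b)
    (hub : Commute u b) (hubj : Commute u (b * j)) : Commute u j :=
  hb <| show b * (u * j) = b * (j * u) by
    rw [← mul_assoc, ← hub.eq, mul_assoc, hubj.eq, mul_assoc]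

section

variable {𝕜 V : Type*} [RCLike 𝕜] [NormedAddCommGroup V] [InnerProductSpace 𝕜 V]

theorem LinearMap.IsSymmetric.eq_zero_of_forall_hasEigenvalue_eq_zero [FiniteDimensional 𝕜 V]
    {T : V →ₗ[𝕜] V} (hT : T.IsSymmetric) (h : ∀ μ, HasEigenvalue T μ → μ = 0) : T = 0 :=
  (hT.eigenvectorBasis rfl).toBasis.ext fun i => by
    simp [hT.apply_eigenvectorBasis, h _ (hT.hasEigenvalue_eigenvalues rfl i)]

theorem LinearIsometryEquiv.commute_of_inner_map_map (U : V ≃ₗᵢ[𝕜] V) {A : V →ₗ[𝕜] V}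
    (hA : ∀ x y, ⟪A (U x), U y⟫_𝕜 = ⟪A x, y⟫_𝕜) : Commute (U.toLinearMap : Module.End 𝕜 V) A :=
  LinearMap.ext fun x => ext_inner_right 𝕜 fun z => by
    obtain ⟨y, rfl⟩ := U.surjective z
    simp [hA]

end

section

variable {V : Type*} [NormedAddCommGroup V] [InnerProductSpace ℝ V]

theorem LinearMap.injective_of_inner_map_self_pos {T : V →ₗ[ℝ] V}
    (hT : ∀ x, x ≠ 0 → 0 < ⟪T x, x⟫_ℝ) : Function.Injective T :=
  (injective_iff_map_eq_zero T).mpr fun x hx => by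
    by_contra hx0
    simpa [hx] using hT x hx0

theorem LinearMap.isLeftRegular_of_inner_map_self_pos {T : V →ₗ[ℝ] V}
    (hT : ∀ x, x ≠ 0 → 0 < ⟪T x, x⟫_ℝ) : IsLeftRegular T := fun _ _ h =>
  LinearMap.ext fun x => injective_of_inner_map_self_pos hT congr($h x)

variable [FiniteDimensional ℝ V]

theorem LinearMap.IsSymmetric.eq_of_mul_self_eq_mul_self {B C : V →ₗ[ℝ] V}
    (hB : B.IsSymmetric) (hC : C.IsSymmetric)
    (hBpos : ∀ x, x ≠ 0 → 0 < ⟪B x, x⟫_ℝ) (hCpos : ∀ x, x ≠ 0 → 0 < ⟪C x, x⟫_ℝ)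
    (h : B * B = C * C) : B = C := by
  have hD : (B - C).IsSymmetric := hB.sub hC
  refine sub_eq_zero.mp (hD.eq_zero_of_forall_hasEigenvalue_eq_zero fun μ hμ => ?_)
  obtain ⟨v, hv⟩ := hμ.exists_hasEigenvector
  have hDv : (B - C) v = μ • v := hv.apply_eq_smul
  have hanti : B * (B - C) + (B - C) * C = 0 := by rw [mul_sub, sub_mul, h]; abel
  have hμsum : μ * (⟪B v, v⟫_ℝ + ⟪C v, v⟫_ℝ) = 0 :=
    calc μ * (⟪B v, v⟫_ℝ + ⟪C v, v⟫_ℝ) = ⟪B ((B - C) v), v⟫_ℝ + ⟪(B - C) (C v), v⟫_ℝ := by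
          rw [hD (C v) v, hDv, map_smul, real_inner_smul_left, real_inner_smul_right]; ring
      _ = 0 := by rw [← inner_add_left]; simpa using congr(⟪$hanti v, v⟫_ℝ)
  exact (mul_eq_zero.mp hμsum).resolve_right (add_pos (hBpos v hv.2) (hCpos v hv.2)).ne'

theorem LinearIsometryEquiv.commute_of_commute_mul_self (U : V ≃ₗᵢ[ℝ] V) {B : V →ₗ[ℝ] V}
    (hB : B.IsSymmetric) (hBpos : ∀ x, x ≠ 0 → 0 < ⟪B x, x⟫_ℝ)
    (h : Commute (U.toLinearMap : Module.End ℝ V) (B * B)) :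
    Commute (U.toLinearMap : Module.End ℝ V) B := by
  set C : V →ₗ[ℝ] V := U.toLinearMap ∘ₗ B ∘ₗ U.symm.toLinearMap
  have hC : C.IsSymmetric := (LinearMap.isSymmetric_linearIsometryEquiv_conj_iff B U).mpr hB
  have hCpos : ∀ x, x ≠ 0 → 0 < ⟪C x, x⟫_ℝ := fun x hx => by
    simpa [C, LinearIsometryEquiv.inner_map_eq_flip] using hBpos (U.symm x) (by simpa using hx)
  have hCC : C * C = B * B := LinearMap.ext fun x => by
    simpa [C] using congr($h.eq (U.symm x))
  have hCB : C = B := hC.eq_of_mul_self_eq_mul_self hB hCpos hBpos hCC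
  exact LinearMap.ext fun x => by simpa [C] using congr($hCB (U x))

end

theorem gromov_J_natural_general
    (V : Type*) [NormedAddCommGroup V] [InnerProductSpace ℝ V] [FiniteDimensional ℝ V]
    (ω : V →ₗ[ℝ] V →ₗ[ℝ] ℝ)
    (A B J : V →ₗ[ℝ] V)
    (hA : ∀ x y, (inner ℝ (A x) y : ℝ) = ω x y)
    (hBsa : ∀ x y, (inner ℝ (B x) y : ℝ) = (inner ℝ x (B y) : ℝ))
    (hBpos : ∀ x : V, x ≠ 0 → 0 < (inner ℝ (B x) x : ℝ))
    (hB2 : B ∘ₗ B = -(A ∘ₗ A))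
    (hJ : B ∘ₗ J = A)
    (g : V → V → ℝ) (hg : ∀ x y, g x y = ω x (J y))
    (φ : V →ₗ[ℝ] V)
    (hφg₀ : ∀ x y, (inner ℝ (φ x) (φ y) : ℝ) = (inner ℝ x y : ℝ))
    (hφω : ∀ x y, ω (φ x) (φ y) = ω x y) :
    φ ∘ₗ J = J ∘ₗ φ ∧ ∀ x y, g (φ x) (φ y) = g x y := by
  let U : V ≃ₗᵢ[ℝ] V := (φ.isometryOfInner hφg₀).toLinearIsometryEquiv rfl
  have hUA : Commute (U.toLinearMap : Module.End ℝ V) A :=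
    U.commute_of_inner_map_map fun x y => by simp only [hA]; exact hφω x y
  have hUB : Commute (U.toLinearMap : Module.End ℝ V) B :=
    U.commute_of_commute_mul_self hBsa hBpos <| by
      rw [mul_eq_comp, hB2]
      exact (hUA.mul_right hUA).neg_right
  have hUJ : Commute (U.toLinearMap : Module.End ℝ V) J :=
    Commute.of_isLeftRegular (LinearMap.isLeftRegular_of_inner_map_self_pos hBpos) hUB <| by
      rw [mul_eq_comp, hJ]
      exact hUA
  have hφJ : φ ∘ₗ J = J ∘ₗ φ := hUJ.eq
  refine ⟨hφJ, fun x y => ?_⟩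
  rw [hg, hg, ← hφω x (J y), ← LinearMap.comp_apply φ J, hφJ, LinearMap.comp_apply]

theorem gromov_J_natural
    (V : Type*) [NormedAddCommGroup V] [InnerProductSpace ℝ V] [FiniteDimensional ℝ V]
    (ω : V →ₗ[ℝ] V →ₗ[ℝ] ℝ)
    (hskew : ∀ x y, ω x y = - ω y x)
    (hnd : ∀ x, (∀ y, ω x y = 0) → x = 0)
    (A B J : V →ₗ[ℝ] V)
    (hA : ∀ x y, (inner ℝ (A x) y : ℝ) = ω x y)
    (hBsa : ∀ x y, (inner ℝ (B x) y : ℝ) = (inner ℝ x (B y) : ℝ))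
    (hBpos : ∀ x : V, x ≠ 0 → 0 < (inner ℝ (B x) x : ℝ))
    (hB2 : B ∘ₗ B = -(A ∘ₗ A))
    (hJ : B ∘ₗ J = A)
    (g : V → V → ℝ) (hg : ∀ x y, g x y = ω x (J y))
    (φ : V →ₗ[ℝ] V)
    (hφg₀ : ∀ x y, (inner ℝ (φ x) (φ y) : ℝ) = (inner ℝ x y : ℝ))
    (hφω : ∀ x y, ω (φ x) (φ y) = ω x y) :
    φ ∘ₗ J = J ∘ₗ φ ∧ ∀ x y, g (φ x) (φ y) = g x y :=
  gromov_J_natural_general V ω A B J hA hBsa hBpos hB2 hJ g hg φ hφg₀ hφω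
end
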